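/- arXiv:2203.15938 — 4 statements merged into one kernel-verified Lean document; each statement's English description precedes it below -/
import Mathlib

section
/- Let V = V₁ + iV₂ satisfy Assumption (iR) on (0,∞) and fix δ ∈ (0,1/4). Then there exist c > 0 and b₀ > 0 such that for all b ≥ b₀ and every φ ∈ C_c^∞((0,∞),ℂ) whose support is disjoint from the interval Ω'_b := (x_b − δ·x_b^{−ν}, x_b + δ·x_b^{−ν}), one has c·δ·(V₂'(x_b))^{2/3}·(Υ(x_b))^{−1}·‖φ‖_{L²(0,∞)} ≤ ‖−φ'' + V·φ − λ_b·φ‖_{L²(0,∞)}. -/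
open MeasureTheory Filter

/-- The L² norm over the half-line (0,∞). -/
noncomputable def L2P (f : ℝ → ℂ) : ℝ :=
  (eLpNorm f 2 (volume.restrict (Set.Ioi (0:ℝ)))).toReal

/-- The L² norm over ℝ. -/
noncomputable def L2R (f : ℝ → ℂ) : ℝ :=
  (eLpNorm f 2 volume).toReal

/-- V₂ = Im V. -/
noncomputable def ImV (V : ℝ → ℂ) (x : ℝ) : ℝ := (V x).im

/-- V₁ = Re V. -/
noncomputable def ReV (V : ℝ → ℂ) (x : ℝ) : ℝ := (V x).re

/-- Υ(x) = x^ν · (V₂'(x))^(−1/3). -/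
noncomputable def Upsilon (V : ℝ → ℂ) (ν x : ℝ) : ℝ :=
  x ^ ν * deriv (ImV V) x ^ (-(1:ℝ)/3)

/-- The complex number ρ·e^{iθ}. -/
noncomputable def polarC (ρ θ : ℝ) : ℂ := (ρ : ℂ) * Complex.exp (Complex.I * (θ : ℂ))

/-- κ_b = |r·e^{iθ} − r_b·e^{iθ_b}| with r = √(l²+1), θ = arg(l+i),
r_b = √((V₁'(x_b)/V₂'(x_b))²+1), θ_b = arg(V₁'(x_b)/V₂'(x_b) + i). -/
noncomputable def kappaB (V : ℝ → ℂ) (l xb : ℝ) : ℝ :=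
  ‖(polarC (Real.sqrt (l ^ 2 + 1)) (Complex.arg ((l : ℂ) + Complex.I)) -
      polarC (Real.sqrt ((deriv (ReV V) xb / deriv (ImV V) xb) ^ 2 + 1))
        (Complex.arg (((deriv (ReV V) xb / deriv (ImV V) xb : ℝ) : ℂ) + Complex.I)))‖

/-- κ(r,θ) = inf over nonzero C_c^∞ functions φ of ‖−φ'' + r e^{iθ} x φ‖/‖φ‖,
the reciprocal of the norm of the inverse of the complex Airy operator A_{r,θ}. -/
noncomputable def airyResInvNorm (ρ θ : ℝ) : ℝ :=
  sInf { c : ℝ | ∃ φ : ℝ → ℂ, ContDiff ℝ (⊤ : ℕ∞) φ ∧ HasCompactSupport φ ∧ φ ≠ 0 ∧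
    c = L2R (fun x => -(deriv (deriv φ) x) + polarC ρ θ * (x : ℂ) * φ x) / L2R φ }

/-- Assumption (iR): V locally bounded on [0,∞), C² on (x₀,∞), Re V ≥ 0 a.e.,
V₂ unbounded and eventually increasing, controlled derivatives with parameter ν,
Υ → 0, and V₁'/V₂' → l ∈ [0,∞). -/
structure AssumptionIR (V : ℝ → ℂ) (x₀ ν l : ℝ) : Prop where
  x0_nonneg : 0 ≤ x₀
  nu_ge : -1 ≤ ν
  l_nonneg : 0 ≤ l
  loc_bdd : ∀ K : Set ℝ, IsCompact K → ∃ M : ℝ, ∀ x ∈ K ∩ Set.Ici (0:ℝ), ‖V x‖ ≤ M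
  smooth : ContDiffOn ℝ 2 V (Set.Ioi x₀)
  re_nonneg : ∀ᵐ x ∂(volume.restrict (Set.Ioi (0:ℝ))), 0 ≤ (V x).re
  im_unbounded : Tendsto (ImV V) atTop atTop
  im_deriv_pos : ∀ x > x₀, 0 < deriv (ImV V) x
  controlled : ∃ c > 0, ∀ x > x₀,
      deriv (ImV V) x ≤ c * ImV V x * x ^ ν ∧
      ‖deriv (deriv V) x‖ ≤ c * deriv (ImV V) x * x ^ ν
  upsilon_small : Tendsto (fun x => Upsilon V ν x) atTop (nhds 0)
  ratio_lim : Tendsto (fun x => deriv (ReV V) x / deriv (ImV V) x) atTop (nhds l)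

/-!
Multiply `f = -φ'' + (V - λ_b) φ` by `w · conj φ`, where `w = sgn (x - x_b)`, and take imaginary
parts. As `φ (x_b) = 0`, integration by parts on each side of `x_b` kills `∫ w Im (φ'' conj φ)`,
so `∫ w (V₂ - b) |φ|² ≤ ‖f‖ ‖φ‖`. Off the window, `w (V₂ - b) ≳ δ x_b^{-ν} V₂'(x_b)`, which is
`δ V₂'(x_b)^{2/3} Υ(x_b)⁻¹`: on the window `|V₂''| ≤ c V₂' x^ν` keeps `log V₂'` within `O(δ)` of
its value at `x_b`, so `V₂` rises by that much across each half of the window; beyond it `V₂` is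
monotone; and on `(0, x₀]` the potential is bounded while `b` is large.
-/

open Set
open scoped ENNReal ComplexConjugate

section L2

variable {α E F : Type*} [MeasurableSpace α] {μ : Measure α}
  [NormedAddCommGroup E] [NormedAddCommGroup F]

-- Only `g` has to be measurable: `V` is not assumed measurable, hence neither is
-- `-φ'' + (V - λ_b) φ`.
theorem lintegral_enorm_mul_le_eLpNorm_mul_eLpNorm {f : α → E} {g : α → F}
    (hg : AEStronglyMeasurable g μ) :
    ∫⁻ x, ‖f x‖ₑ * ‖g x‖ₑ ∂μ ≤ eLpNorm f 2 μ * eLpNorm g 2 μ := by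
  obtain ⟨h, hh, hle, heq⟩ := exists_measurable_le_lintegral_eq μ fun x => ‖f x‖ₑ * ‖g x‖ₑ
  have hfactor : h = fun x => h x / ‖g x‖ₑ * ‖g x‖ₑ := by
    funext x
    by_cases hgx : g x = 0
    · simpa [hgx] using hle x
    · exact (ENNReal.div_mul_cancel (enorm_ne_zero.2 hgx) enorm_ne_top).symm
  have hdom : ∀ x, h x / ‖g x‖ₑ ≤ ‖f x‖ₑ := fun x => ENNReal.div_le_of_le_mul (hle x)
  rw [heq, hfactor, eLpNorm_eq_lintegral_rpow_enorm_toReal two_ne_zero ENNReal.ofNat_ne_top,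
    eLpNorm_eq_lintegral_rpow_enorm_toReal two_ne_zero ENNReal.ofNat_ne_top]
  simp only [ENNReal.toReal_ofNat]
  calc ∫⁻ x, h x / ‖g x‖ₑ * ‖g x‖ₑ ∂μ
      ≤ (∫⁻ x, (h x / ‖g x‖ₑ) ^ (2:ℝ) ∂μ) ^ (1 / (2:ℝ)) * (∫⁻ x, ‖g x‖ₑ ^ (2:ℝ) ∂μ) ^ (1 / (2:ℝ)) :=
        ENNReal.lintegral_mul_le_Lp_mul_Lq μ Real.HolderConjugate.two_two
          (hh.aemeasurable.div hg.enorm) hg.enorm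
    _ ≤ _ := by
        gcongr with x
        exact hdom x

theorem eLpNorm_ne_top_of_norm_le_on {f : α → E} {K : Set α} {C : ℝ} {p : ℝ≥0∞} (hK : μ K ≠ ∞)
    (hzero : ∀ x ∉ K, f x = 0) (hbound : ∀ x ∈ K, ‖f x‖ ≤ C) : eLpNorm f p μ ≠ ∞ := by
  have hsupp : Function.support f ⊆ K := fun x hx => by_contra fun hxK => hx (hzero x hxK)
  rw [← eLpNorm_restrict_eq_of_support_subset hsupp]
  refine ne_top_of_le_ne_top ?_ (eLpNorm_le_of_ae_bound (C := max C 0) ?_)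
  · refine ENNReal.mul_ne_top (ENNReal.rpow_ne_top_of_nonneg (by positivity) ?_)
      ENNReal.ofReal_ne_top
    rwa [Measure.restrict_apply_univ]
  · refine Eventually.of_forall fun x => ?_
    by_cases hx : x ∈ K
    · exact (hbound x hx).trans (le_max_left _ _)
    · simp [hzero x hx]

theorem integral_norm_sq_eq_toReal_eLpNorm_sq {φ : α → E} (hφ : MemLp φ 2 μ) :
    ∫ x, ‖φ x‖ ^ 2 ∂μ = (eLpNorm φ 2 μ).toReal ^ 2 := by
  rw [hφ.eLpNorm_eq_integral_rpow_norm two_ne_zero ENNReal.ofNat_ne_top]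
  rw [ENNReal.toReal_ofReal (by positivity)]
  simp only [ENNReal.toReal_ofNat]
  rw [← Real.rpow_natCast, ← Real.rpow_mul (integral_nonneg fun x => by positivity)]
  norm_num

theorem mul_toReal_eLpNorm_le {φ f : α → E} {G : α → ℝ} {m : ℝ} (hφ : MemLp φ 2 μ)
    (hf : eLpNorm f 2 μ ≠ ∞) (hG : Integrable G μ) (hG0 : ∫ x, G x ∂μ = 0)
    (hpt : ∀ᵐ x ∂μ, m * ‖φ x‖ ^ 2 + G x ≤ ‖f x‖ * ‖φ x‖) :
    m * (eLpNorm φ 2 μ).toReal ≤ (eLpNorm f 2 μ).toReal := by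
  set a := (eLpNorm φ 2 μ).toReal
  set b := (eLpNorm f 2 μ).toReal
  have hH : Integrable (fun x => m * ‖φ x‖ ^ 2 + G x) μ :=
    ((hφ.integrable_norm_pow two_ne_zero).const_mul m).add hG
  have hlint : ∫⁻ x, ENNReal.ofReal (m * ‖φ x‖ ^ 2 + G x) ∂μ ≤ eLpNorm f 2 μ * eLpNorm φ 2 μ := by
    refine (lintegral_mono_ae ?_).trans
      (lintegral_enorm_mul_le_eLpNorm_mul_eLpNorm hφ.aestronglyMeasurable)
    filter_upwards [hpt] with x hx
    rw [← ofReal_norm, ← ofReal_norm, ← ENNReal.ofReal_mul (norm_nonneg _)]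
    exact ENNReal.ofReal_le_ofReal hx
  have hsq : m * a ^ 2 ≤ b * a := by
    calc m * a ^ 2 = ∫ x, m * ‖φ x‖ ^ 2 + G x ∂μ := by
          rw [integral_add ((hφ.integrable_norm_pow two_ne_zero).const_mul m) hG, hG0,
            integral_const_mul, integral_norm_sq_eq_toReal_eLpNorm_sq hφ, add_zero]
      _ ≤ (∫⁻ x, ENNReal.ofReal (m * ‖φ x‖ ^ 2 + G x) ∂μ).toReal := by
          rw [integral_eq_lintegral_pos_part_sub_lintegral_neg_part hH]
          exact sub_le_self _ ENNReal.toReal_nonneg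
      _ ≤ (eLpNorm f 2 μ * eLpNorm φ 2 μ).toReal :=
          ENNReal.toReal_mono (ENNReal.mul_ne_top hf hφ.eLpNorm_ne_top) hlint
      _ = b * a := ENNReal.toReal_mul
  have ha : 0 ≤ a := ENNReal.toReal_nonneg
  rcases ha.eq_or_lt with ha | ha
  · rw [← ha, mul_zero]
    exact ENNReal.toReal_nonneg
  · exact le_of_mul_le_mul_right (by linarith) ha

end L2

noncomputable def sideSign (a x : ℝ) : ℝ := if a < x then 1 else -1

theorem measurable_sideSign (a : ℝ) : Measurable (sideSign a) :=
  Measurable.ite measurableSet_Ioi measurable_const measurable_const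

theorem norm_sideSign (a x : ℝ) : ‖sideSign a x‖ = 1 := by
  unfold sideSign
  split_ifs <;> simp

theorem sideSign_mul_le_abs (a x t : ℝ) : sideSign a x * t ≤ |t| := by
  unfold sideSign
  split_ifs
  · simpa using le_abs_self t
  · simpa using neg_le_abs t

section IntegrationByParts

variable {φ : ℝ → ℂ}

theorem hasDerivAt_im_deriv_mul_conj (hφ : ContDiff ℝ 2 φ) (x : ℝ) :
    HasDerivAt (fun y => (deriv φ y * conj (φ y)).im)
      (deriv (deriv φ) x * conj (φ x)).im x := by
  have hφ' : ContDiff ℝ 1 (deriv φ) := hφ.iterate_deriv' 1 1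
  have h : HasDerivAt (fun y => (deriv φ y * conj (φ y)).im)
      (deriv (deriv φ) x * conj (φ x) + deriv φ x * conj (deriv φ x)).im x :=
    Complex.imCLM.hasFDerivAt.comp_hasDerivAt x
      ((hφ'.differentiable one_ne_zero x).hasDerivAt.mul
        ((hφ.differentiable two_ne_zero x).hasDerivAt.star))
  refine h.congr_deriv ?_
  simp [Complex.mul_im]
  ring

theorem hasCompactSupport_im_deriv_mul_conj (hc : HasCompactSupport φ) :
    HasCompactSupport fun x => (deriv φ x * conj (φ x)).im :=
  (hc.deriv.mul_right (f' := fun y => conj (φ y))).comp_left (g := Complex.im) rfl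

theorem integrable_im_deriv_deriv_mul_conj (hφ : ContDiff ℝ 2 φ) (hc : HasCompactSupport φ) :
    Integrable fun x => (deriv (deriv φ) x * conj (φ x)).im := by
  have hφ'' : Continuous (deriv (deriv φ)) := (hφ.iterate_deriv' 0 2).continuous
  refine Continuous.integrable_of_hasCompactSupport (by fun_prop) ?_
  exact ((hc.comp_left (g := conj) (map_zero _)).mul_left (f := deriv (deriv φ))).comp_left
    (g := Complex.im) rfl

theorem integral_Ioi_im_deriv_deriv_mul_conj (hφ : ContDiff ℝ 2 φ) (hc : HasCompactSupport φ)
    {a : ℝ} (ha : φ a = 0) : ∫ x in Ioi a, (deriv (deriv φ) x * conj (φ x)).im = 0 := by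
  rw [integral_Ioi_of_hasDerivAt_of_tendsto' (fun x _ => hasDerivAt_im_deriv_mul_conj hφ x)
    ?_ ((hasCompactSupport_im_deriv_mul_conj hc).is_zero_at_infty.mono_left atTop_le_cocompact)]
  · simp [ha]
  · exact (integrable_im_deriv_deriv_mul_conj hφ hc).integrableOn

theorem integral_Iic_im_deriv_deriv_mul_conj (hφ : ContDiff ℝ 2 φ) (hc : HasCompactSupport φ)
    {a : ℝ} (ha : φ a = 0) : ∫ x in Iic a, (deriv (deriv φ) x * conj (φ x)).im = 0 := by
  rw [integral_Iic_of_hasDerivAt_of_tendsto' (fun x _ => hasDerivAt_im_deriv_mul_conj hφ x)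
    ?_ ((hasCompactSupport_im_deriv_mul_conj hc).is_zero_at_infty.mono_left atBot_le_cocompact)]
  · simp [ha]
  · exact (integrable_im_deriv_deriv_mul_conj hφ hc).integrableOn

theorem integral_sideSign_mul_im_deriv_deriv_mul_conj (hφ : ContDiff ℝ 2 φ)
    (hc : HasCompactSupport φ) {a : ℝ} (ha : φ a = 0) :
    ∫ x, sideSign a x * (deriv (deriv φ) x * conj (φ x)).im = 0 := by
  have hI := integrable_im_deriv_deriv_mul_conj hφ hc
  have hsI : Integrable fun x => sideSign a x * (deriv (deriv φ) x * conj (φ x)).im :=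
    hI.bdd_mul (measurable_sideSign a).aestronglyMeasurable
      (Eventually.of_forall fun x => (norm_sideSign a x).le)
  rw [← intervalIntegral.integral_Iic_add_Ioi hsI.integrableOn hsI.integrableOn,
    setIntegral_congr_fun measurableSet_Iic (g := fun x => -(deriv (deriv φ) x * conj (φ x)).im)
      (fun x hx => by rw [sideSign, if_neg (not_lt.2 (show x ≤ a from hx))]; ring),
    setIntegral_congr_fun measurableSet_Ioi (g := fun x => (deriv (deriv φ) x * conj (φ x)).im)
      (fun x hx => by rw [sideSign, if_pos (show a < x from hx)]; ring),
    integral_neg, integral_Iic_im_deriv_deriv_mul_conj hφ hc ha,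
    integral_Ioi_im_deriv_deriv_mul_conj hφ hc ha]
  simp

end IntegrationByParts

theorem sq_norm_mul_sub_sideSign_mul_im_le (a x : ℝ) {p q w : ℂ} {m : ℝ}
    (hm : m ≤ sideSign a x * w.im) :
    m * ‖p‖ ^ 2 - sideSign a x * (q * conj p).im ≤ ‖-q + w * p‖ * ‖p‖ := by
  have hIm : ((-q + w * p) * conj p).im = -(q * conj p).im + w.im * ‖p‖ ^ 2 := by
    rw [add_mul, mul_assoc, Complex.mul_conj', ← Complex.ofReal_pow, Complex.add_im,
      Complex.im_mul_ofReal, neg_mul, Complex.neg_im]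
  have hside := sideSign_mul_le_abs a x ((-q + w * p) * conj p).im
  have habs := Complex.abs_im_le_norm ((-q + w * p) * conj p)
  rw [norm_mul, Complex.norm_conj] at habs
  rw [hIm] at hside habs
  nlinarith [mul_le_mul_of_nonneg_right hm (sq_nonneg ‖p‖)]

theorem mul_L2P_le_L2P_of_le_sideSign_mul_im {φ W : ℝ → ℂ} {a m : ℝ} (hφ : ContDiff ℝ 2 φ)
    (hc : HasCompactSupport φ) (hpos : tsupport φ ⊆ Ioi 0)
    (hW : ∃ M, ∀ x ∈ tsupport φ, ‖W x‖ ≤ M) (ha : φ a = 0)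
    (hgap : ∀ x ∈ Function.support φ, m ≤ sideSign a x * (W x).im) :
    m * L2P φ ≤ L2P fun x => -deriv (deriv φ) x + W x * φ x := by
  set I : ℝ → ℝ := fun x => (deriv (deriv φ) x * conj (φ x)).im
  have hφ'' : Continuous (deriv (deriv φ)) := (hφ.iterate_deriv' 0 2).continuous
  have hφ''zero : ∀ x ∉ tsupport φ, deriv (deriv φ) x = 0 := fun x hx =>
    image_eq_zero_of_notMem_tsupport fun h => hx (tsupport_deriv_subset (tsupport_deriv_subset h))
  refine mul_toReal_eLpNorm_le (G := fun x => -(sideSign a x * I x))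
    (hφ.continuous.memLp_of_hasCompactSupport hc) ?_ ?_ ?_ (Eventually.of_forall fun x => ?_)
  · obtain ⟨M, hM⟩ := hW
    obtain ⟨C₀, hC₀⟩ := hc.exists_bound_of_continuous hφ.continuous
    obtain ⟨C₂, hC₂⟩ := hc.deriv.deriv.exists_bound_of_continuous hφ''
    refine eLpNorm_ne_top_of_norm_le_on (K := tsupport φ) (C := C₂ + M * C₀)
      ((Measure.restrict_apply_le _ _).trans_lt hc.isCompact.measure_lt_top).ne
      (fun x hx => by simp [hφ''zero x hx, image_eq_zero_of_notMem_tsupport hx])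
      (fun x hx => ?_)
    calc ‖-deriv (deriv φ) x + W x * φ x‖ ≤ ‖deriv (deriv φ) x‖ + ‖W x‖ * ‖φ x‖ := by
          simpa [norm_mul] using norm_add_le (-deriv (deriv φ) x) (W x * φ x)
      _ ≤ C₂ + M * C₀ := by
          gcongr
          · exact hC₂ x
          · exact (norm_nonneg _).trans (hM x hx)
          · exact hM x hx
          · exact hC₀ x
  · exact ((integrable_im_deriv_deriv_mul_conj hφ hc).bdd_mul
      (measurable_sideSign a).aestronglyMeasurable
      (Eventually.of_forall fun x => (norm_sideSign a x).le)).neg.restrict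
  · rw [setIntegral_eq_integral_of_forall_compl_eq_zero fun x hx => ?_, integral_neg,
      integral_sideSign_mul_im_deriv_deriv_mul_conj hφ hc ha, neg_zero]
    simp [I, image_eq_zero_of_notMem_tsupport fun h => hx (hpos h)]
  · by_cases hx : φ x = 0
    · simp [I, hx]
    simpa [I, sub_eq_add_neg] using sq_norm_mul_sub_sideSign_mul_im_le a x (hgap x hx)

theorem mul_exp_neg_le_of_abs_deriv_le {g g' : ℝ → ℝ} {s : Set ℝ} (hs : Convex ℝ s)
    (hg : ∀ y ∈ s, HasDerivWithinAt g (g' y) s y) (hpos : ∀ y ∈ s, 0 < g y) {C : ℝ}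
    (hC : ∀ y ∈ s, |g' y| ≤ C * g y) {x y : ℝ} (hx : x ∈ s) (hy : y ∈ s) :
    g x * Real.exp (-(C * |y - x|)) ≤ g y := by
  have hlog : ∀ z ∈ s, HasDerivWithinAt (fun z => Real.log (g z)) ((g z)⁻¹ * g' z) s z :=
    fun z hz => (hg z hz).log (hpos z hz).ne' |>.congr_deriv (by field_simp)
  have hlog_le : ∀ z ∈ s, ‖(g z)⁻¹ * g' z‖ ≤ C := fun z hz => by
    rw [Real.norm_eq_abs, abs_mul, abs_inv, abs_of_pos (hpos z hz), inv_mul_le_iff₀ (hpos z hz)]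
    linarith [hC z hz]
  have hdist := hs.norm_image_sub_le_of_norm_hasDerivWithin_le hlog hlog_le hx hy
  rw [Real.norm_eq_abs, Real.norm_eq_abs] at hdist
  calc g x * Real.exp (-(C * |y - x|))
      = Real.exp (Real.log (g x) - C * |y - x|) := by
        rw [Real.exp_sub, Real.exp_log (hpos x hx), Real.exp_neg, div_eq_mul_inv]
    _ ≤ Real.exp (Real.log (g y)) := Real.exp_le_exp.2 (by linarith [(abs_le.1 hdist).1])
    _ = g y := Real.exp_log (hpos y hy)

theorem rpow_le_mul_rpow_of_mem_Icc {a c x y : ℝ} (ha : 0 < a) (hx : 0 < x)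
    (hy : y ∈ Icc (a * x) (c * x)) (ν : ℝ) : y ^ ν ≤ (a ^ ν + c ^ ν) * x ^ ν := by
  have hy0 : 0 < y := (mul_pos ha hx).trans_le hy.1
  have hc : 0 < c := pos_of_mul_pos_left (hy0.trans_le hy.2) hx.le
  have ha' := Real.rpow_nonneg ha.le ν
  have hc' := Real.rpow_nonneg hc.le ν
  have hx' := Real.rpow_nonneg hx.le ν
  rcases le_total 0 ν with hν | hν
  · calc y ^ ν ≤ (c * x) ^ ν := Real.rpow_le_rpow hy0.le hy.2 hν
      _ = c ^ ν * x ^ ν := Real.mul_rpow hc.le hx.le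
      _ ≤ (a ^ ν + c ^ ν) * x ^ ν := by nlinarith
  · calc y ^ ν ≤ (a * x) ^ ν := Real.rpow_le_rpow_of_nonpos (mul_pos ha hx) hy.1 hν
      _ = a ^ ν * x ^ ν := Real.mul_rpow ha.le hx.le
      _ ≤ (a ^ ν + c ^ ν) * x ^ ν := by nlinarith

theorem hasDerivAt_ImV {V : ℝ → ℂ} {x : ℝ} (hV : DifferentiableAt ℝ V x) :
    HasDerivAt (ImV V) (deriv V x).im x :=
  Complex.imCLM.hasFDerivAt.comp_hasDerivAt x hV.hasDerivAt

theorem hasDerivAt_deriv_ImV {V : ℝ → ℂ} {s : Set ℝ} (hs : IsOpen s) (hV : ContDiffOn ℝ 2 V s)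
    {x : ℝ} (hx : x ∈ s) : HasDerivAt (deriv (ImV V)) (deriv (deriv V) x).im x := by
  have hV' : ContDiffOn ℝ 1 (deriv V) s := hV.deriv_of_isOpen hs (by norm_num)
  have h : HasDerivAt (fun y => (deriv V y).im) (deriv (deriv V) x).im x :=
    Complex.imCLM.hasFDerivAt.comp_hasDerivAt x
      ((hV'.differentiableOn one_ne_zero).differentiableAt (hs.mem_nhds hx)).hasDerivAt
  refine h.congr_of_eventuallyEq ?_
  filter_upwards [hs.mem_nhds hx] with y hy
  exact (hasDerivAt_ImV ((hV.differentiableOn two_ne_zero).differentiableAt (hs.mem_nhds hy))).deriv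

section Window

variable {V : ℝ → ℂ} {x₀ ν c xb h : ℝ}

theorem exp_mul_deriv_ImV_le (hV : ContDiffOn ℝ 2 V (Ioi x₀))
    (hpos : ∀ x > x₀, 0 < deriv (ImV V) x)
    (hc : ∀ x > x₀, ‖deriv (deriv V) x‖ ≤ c * deriv (ImV V) x * x ^ ν) (hc0 : 0 ≤ c)
    (hxb : 0 < xb) (hh : h ≤ xb / 4) (hwin : x₀ < xb - h) {y : ℝ}
    (hy : y ∈ Icc (xb - h) (xb + h)) :
    Real.exp (-(c * ((3/4) ^ ν + (5/4) ^ ν) * xb ^ ν * h)) * deriv (ImV V) xb ≤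
      deriv (ImV V) y := by
  set J := Icc (xb - h) (xb + h)
  have hJ : J ⊆ Ioi x₀ := fun z hz => hwin.trans_le hz.1
  have hxbJ : xb ∈ J := ⟨by linarith [hy.1, hy.2], by linarith [hy.1, hy.2]⟩
  set K : ℝ := (3/4) ^ ν + (5/4) ^ ν
  have hK : 0 ≤ K := by positivity
  have hgronwall := mul_exp_neg_le_of_abs_deriv_le (convex_Icc _ _) (C := c * K * xb ^ ν)
    (g' := fun z => (deriv (deriv V) z).im)
    (fun z hz => (hasDerivAt_deriv_ImV isOpen_Ioi hV (hJ hz)).hasDerivWithinAt)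
    (fun z hz => hpos z (hJ hz)) (fun z hz => ?_) hxbJ hy
  · refine le_trans ?_ ((mul_comm _ _).trans_le hgronwall)
    obtain ⟨hy₁, hy₂⟩ : xb - h ≤ y ∧ y ≤ xb + h := hy
    gcongr
    · exact (hpos xb (hJ hxbJ)).le
    · exact abs_le.2 ⟨by linarith, by linarith⟩
  · have hzν : z ^ ν ≤ K * xb ^ ν :=
      rpow_le_mul_rpow_of_mem_Icc (by norm_num) hxb ⟨by linarith [hz.1], by linarith [hz.2]⟩ ν
    calc |(deriv (deriv V) z).im| ≤ ‖deriv (deriv V) z‖ := Complex.abs_im_le_norm _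
      _ ≤ c * deriv (ImV V) z * z ^ ν := hc z (hJ hz)
      _ ≤ c * deriv (ImV V) z * (K * xb ^ ν) := by
          gcongr
          exact mul_nonneg hc0 (hpos z (hJ hz)).le
      _ = c * K * xb ^ ν * deriv (ImV V) z := by ring

theorem strictMonoOn_ImV (hV : ContDiffOn ℝ 2 V (Ioi x₀))
    (hpos : ∀ x > x₀, 0 < deriv (ImV V) x) : StrictMonoOn (ImV V) (Ioi x₀) :=
  strictMonoOn_of_deriv_pos (convex_Ioi x₀)
    (Complex.continuous_im.comp_continuousOn hV.continuousOn)
    (by rw [interior_Ioi]; exact hpos)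

theorem exp_mul_deriv_ImV_mul_le_sideSign_mul (hV : ContDiffOn ℝ 2 V (Ioi x₀))
    (hpos : ∀ x > x₀, 0 < deriv (ImV V) x)
    (hc : ∀ x > x₀, ‖deriv (deriv V) x‖ ≤ c * deriv (ImV V) x * x ^ ν) (hc0 : 0 ≤ c)
    (hxb : 0 < xb) (hh0 : 0 ≤ h) (hh : h ≤ xb / 4) (hwin : x₀ < xb - h) {x : ℝ} (hx : x₀ < x)
    (hxout : x ∉ Ioo (xb - h) (xb + h)) :
    Real.exp (-(c * ((3/4) ^ ν + (5/4) ^ ν) * xb ^ ν * h)) * deriv (ImV V) xb * h ≤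
      sideSign xb x * (ImV V x - ImV V xb) := by
  set J := Icc (xb - h) (xb + h)
  have hJ : J ⊆ Ioi x₀ := fun z hz => hwin.trans_le hz.1
  have hdiff : ∀ z ∈ J, DifferentiableAt ℝ (ImV V) z := fun z hz =>
    (hasDerivAt_ImV ((hV.differentiableOn two_ne_zero).differentiableAt
      (isOpen_Ioi.mem_nhds (hJ hz)))).differentiableAt
  have hgain := (convex_Icc (xb - h) (xb + h)).mul_sub_le_image_sub_of_le_deriv
    (fun z hz => (hdiff z hz).continuousAt.continuousWithinAt)
    (fun z hz => (hdiff z (interior_subset hz)).differentiableWithinAt)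
    (fun z hz => exp_mul_deriv_ImV_le hV hpos hc hc0 hxb hh hwin (interior_subset hz))
  have hmono := (strictMonoOn_ImV hV hpos).monotoneOn
  have hxbJ : xb ∈ J := ⟨by linarith, by linarith⟩
  rcases lt_or_ge xb x with hgt | hle
  · have hx' : xb + h ≤ x := not_lt.1 fun h' => hxout ⟨by linarith, h'⟩
    have := hmono (hJ ⟨by linarith, le_rfl⟩) hx hx'
    have := hgain xb hxbJ (xb + h) ⟨by linarith, le_rfl⟩ (by linarith)
    rw [sideSign, if_pos hgt]
    linarith
  · have hx' : x ≤ xb - h := not_lt.1 fun h' => hxout ⟨h', by linarith⟩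
    have := hmono hx (hJ ⟨le_rfl, by linarith⟩) hx'
    have := hgain (xb - h) ⟨le_rfl, by linarith⟩ xb hxbJ (by linarith)
    rw [sideSign, if_neg (not_lt.2 hle)]
    linarith

end Window

theorem rpow_two_thirds_mul_inv_Upsilon {V : ℝ → ℂ} {ν x : ℝ} (hx : 0 < x)
    (hV : 0 < deriv (ImV V) x) :
    deriv (ImV V) x ^ ((2:ℝ)/3) * (Upsilon V ν x)⁻¹ = x ^ (-ν) * deriv (ImV V) x := by
  rw [Upsilon, mul_inv, ← Real.rpow_neg hx.le, ← Real.rpow_neg hV.le, mul_left_comm,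
    ← Real.rpow_add hV]
  norm_num

theorem le_sideSign_mul_ImV_sub {V : ℝ → ℂ} {x₀ ν l δ c xb b : ℝ}
    (hV : AssumptionIR V x₀ ν l) (hδ : δ ∈ Ioo (0:ℝ) (1/4)) (hc : 0 < c)
    (hctrl : ∀ x > x₀, deriv (ImV V) x ≤ c * ImV V x * x ^ ν ∧
      ‖deriv (deriv V) x‖ ≤ c * deriv (ImV V) x * x ^ ν)
    (hxb1 : 1 < xb) (hxb₀ : 2 * x₀ < xb) (hVxb : ImV V xb = b)
    (hsmall : ∀ x ∈ Ioc 0 x₀, ImV V x ≤ b / 2) {x : ℝ} (hx : 0 < x)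
    (hxout : x ∉ Ioo (xb - δ * xb ^ (-ν)) (xb + δ * xb ^ (-ν))) :
    min (Real.exp (-(c * ((3/4) ^ ν + (5/4) ^ ν) * δ))) (1 / (2 * c * δ)) * δ * xb ^ (-ν) *
      deriv (ImV V) xb ≤ sideSign xb x * (ImV V x - b) := by
  obtain ⟨hδ0, hδ4⟩ := hδ
  set E := Real.exp (-(c * ((3/4) ^ ν + (5/4) ^ ν) * δ))
  have hxbν : xb ^ ν * xb ^ (-ν) = 1 := by
    rw [← Real.rpow_add (by linarith)]; simp
  set h := δ * xb ^ (-ν)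
  have hh0 : 0 < h := mul_pos hδ0 (Real.rpow_pos_of_pos (by linarith) _)
  have hh : h ≤ xb / 4 := by
    have : xb ^ (-ν) ≤ xb := by
      simpa using Real.rpow_le_rpow_of_exponent_le hxb1.le (show -ν ≤ 1 by linarith [hV.nu_ge])
    nlinarith
  have hwin : x₀ < xb - h := by linarith [hV.x0_nonneg]
  set A := deriv (ImV V) xb
  have hA : 0 < A := hV.im_deriv_pos xb (by linarith [hV.x0_nonneg])
  rcases le_or_gt x x₀ with hxx₀ | hxx₀
  · have hm_le_half : min E (1 / (2 * c * δ)) * δ * xb ^ (-ν) * A ≤ b / 2 := by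
      have hAb : A ≤ c * b * xb ^ ν := hVxb ▸ (hctrl xb (by linarith [hV.x0_nonneg])).1
      calc _ ≤ 1 / (2 * c * δ) * δ * xb ^ (-ν) * (c * b * xb ^ ν) := by
            gcongr
            exact min_le_right _ _
        _ = b / 2 * (xb ^ ν * xb ^ (-ν)) := by field_simp
        _ = b / 2 := by rw [hxbν, mul_one]
    rw [sideSign, if_neg (by linarith)]
    linarith [hsmall x ⟨hx, hxx₀⟩]
  · have hgap := exp_mul_deriv_ImV_mul_le_sideSign_mul hV.smooth hV.im_deriv_pos
      (fun x hx => (hctrl x hx).2) hc.le (by linarith) hh0.le hh hwin hxx₀ hxout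
    have hE : c * ((3/4) ^ ν + (5/4) ^ ν) * xb ^ ν * h = c * ((3/4) ^ ν + (5/4) ^ ν) * δ := by
      calc _ = c * ((3/4) ^ ν + (5/4) ^ ν) * δ * (xb ^ ν * xb ^ (-ν)) := by ring
        _ = _ := by rw [hxbν, mul_one]
    rw [hE, hVxb] at hgap
    calc min E (1 / (2 * c * δ)) * δ * xb ^ (-ν) * A = min E (1 / (2 * c * δ)) * (A * h) := by
          ring
      _ ≤ E * (A * h) := by gcongr; exact min_le_left _ _
      _ ≤ _ := by linarith

theorem exists_le_sideSign_mul_ImV_sub {V : ℝ → ℂ} {x₀ ν l δ : ℝ} (hV : AssumptionIR V x₀ ν l)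
    (hδ : δ ∈ Ioo (0:ℝ) (1/4)) :
    ∃ c > 0, ∃ b₀ : ℝ, ∀ b ≥ b₀, ∀ xb : ℝ, x₀ < xb → ImV V xb = b → ∀ x > 0,
      x ∉ Ioo (xb - δ * xb ^ (-ν)) (xb + δ * xb ^ (-ν)) →
        c * δ * xb ^ (-ν) * deriv (ImV V) xb ≤ sideSign xb x * (ImV V x - b) := by
  obtain ⟨c₁, hc₁, hctrl⟩ := hV.controlled
  obtain ⟨M, hM⟩ := hV.loc_bdd (Icc 0 (max 1 (2 * x₀))) isCompact_Icc
  have hImV_le : ∀ x ∈ Icc 0 (max 1 (2 * x₀)), ImV V x ≤ |M| := fun x hx =>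
    (Complex.im_le_norm _).trans ((hM x ⟨hx, hx.1⟩).trans (le_abs_self M))
  refine ⟨min (Real.exp (-(c₁ * ((3/4) ^ ν + (5/4) ^ ν) * δ))) (1 / (2 * c₁ * δ)),
    by have := hδ.1; positivity, 2 * |M| + 1, fun b hb xb hxb hVxb x hx => ?_⟩
  have hxb_large : max 1 (2 * x₀) < xb := by
    by_contra hle
    linarith [hImV_le xb ⟨hV.x0_nonneg.trans hxb.le, not_lt.1 hle⟩, abs_nonneg M]
  refine le_sideSign_mul_ImV_sub hV hδ hc₁ hctrl ((le_max_left _ _).trans_lt hxb_large)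
    ((le_max_right _ _).trans_lt hxb_large) hVxb (fun y hy => ?_) hx
  have hy_le : y ≤ max 1 (2 * x₀) :=
    hy.2.trans (by linarith [le_max_right 1 (2 * x₀), hV.x0_nonneg])
  linarith [hImV_le y ⟨hy.1.le, hy_le⟩, abs_nonneg M]

/-- quadratic-form estimate away from the turning point x_b
(Proposition `prop:away.iR` of the paper). -/
theorem statement1 (V : ℝ → ℂ) (x₀ ν l δ : ℝ) (hV : AssumptionIR V x₀ ν l)
    (hδ : δ ∈ Set.Ioo (0:ℝ) (1/4)) :
    ∃ c > 0, ∃ b₀ : ℝ, ∀ b ≥ b₀, ∀ xb : ℝ, x₀ < xb → ImV V xb = b →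
      ∀ φ : ℝ → ℂ, ContDiff ℝ (⊤ : ℕ∞) φ → HasCompactSupport φ →
        tsupport φ ⊆ Set.Ioi 0 →
        (∀ x ∈ Set.Ioo (xb - δ * xb ^ (-ν)) (xb + δ * xb ^ (-ν)), φ x = 0) →
        c * δ * deriv (ImV V) xb ^ ((2:ℝ)/3) * (Upsilon V ν xb)⁻¹ * L2P φ ≤
          L2P (fun x => -(deriv (deriv φ) x) + V x * φ x - V xb * φ x) := by
  obtain ⟨c, hc, b₀, hgap⟩ := exists_le_sideSign_mul_ImV_sub hV hδ
  refine ⟨c, hc, b₀, fun b hb xb hxb hVxb φ hφ hφc hφpos hφzero => ?_⟩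
  have hxb0 : 0 < xb := hV.x0_nonneg.trans_lt hxb
  have hW : ∃ M, ∀ x ∈ tsupport φ, ‖V x - V xb‖ ≤ M := by
    obtain ⟨M, hM⟩ := hV.loc_bdd _ hφc
    exact ⟨M + ‖V xb‖, fun x hx =>
      (norm_sub_le _ _).trans (by linarith [hM x ⟨hx, mem_Ici.2 (hφpos hx).le⟩])⟩
  have hφxb : φ xb = 0 := by
    have := mul_pos hδ.1 (Real.rpow_pos_of_pos hxb0 (-ν))
    exact hφzero xb ⟨by linarith, by linarith⟩
  have key := mul_L2P_le_L2P_of_le_sideSign_mul_im (hφ.of_le (WithTop.coe_le_coe.2 le_top))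
    hφc hφpos hW hφxb (m := c * δ * xb ^ (-ν) * deriv (ImV V) xb) fun x hx => by
      simpa [ImV, ← hVxb] using hgap b hb xb hxb hVxb x (hφpos (subset_tsupport φ hx))
        fun hmem => hx (hφzero x hmem)
  calc c * δ * deriv (ImV V) xb ^ ((2:ℝ)/3) * (Upsilon V ν xb)⁻¹ * L2P φ
      = c * δ * (deriv (ImV V) xb ^ ((2:ℝ)/3) * (Upsilon V ν xb)⁻¹) * L2P φ := by ring
    _ = c * δ * xb ^ (-ν) * deriv (ImV V) xb * L2P φ := by
        rw [rpow_two_thirds_mul_inv_Upsilon hxb0 (hV.im_deriv_pos xb hxb)]; ring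
    _ ≤ _ := key.trans_eq (by congr 1; funext x; ring)
end

section
/- Let V = iV₂ satisfy Assumption (R) on ℝ. Then for every n ∈ ℕ there exists a constant D_n > 0, and there exists t₀ > 0 independent of n, such that for all t > t₀ and all x ∈ ℝ with |x| ≥ 1: |W_t^{(n)}(x)| ≤ D_n·(1 + W_t(x))·⟨x⟩^{−n}, where W_t(x) := V₂(tx)/V₂(t), so that W_t^{(n)}(x) = t^n·V₂^{(n)}(tx)/V₂(t). -/
/-!
Beyond the point `x₀` of Assumption (R) `V₂` is strictly increasing, so `V₂ t` stays above
a positive constant `m` for all large `t`. For `|x| ≥ 1` one has `t ⟨x⟩ ≤ √2 ⟨t x⟩`, so the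
bound on `V₂^{(n)}(t x)` gives
`tⁿ |V₂^{(n)}(t x)| / V₂ t ≤ C (√2 / ⟨x⟩)ⁿ (1 + V₂ (t x)) / V₂ t`,
and `(1 + V₂ (t x)) / V₂ t ≤ max m⁻¹ 1 · (1 + W_t x)`.
-/

open MeasureTheory Filter

/-- The Japanese bracket ⟨x⟩ = √(1+x²). -/
noncomputable def jbr (x : ℝ) : ℝ := Real.sqrt (1 + x ^ 2)

/-- The Fourier transform 𝓕u(ξ) = (2π)^{−1/2} ∫ e^{−iξx} u(x) dx. -/
noncomputable def FT (u : ℝ → ℂ) (ξ : ℝ) : ℂ :=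
  (Real.sqrt (2 * Real.pi) : ℂ)⁻¹ * ∫ x : ℝ, Complex.exp (-(Complex.I * (ξ : ℂ) * (x : ℂ))) * u x

/-- The inverse Fourier transform 𝓕⁻¹u(x) = (2π)^{−1/2} ∫ e^{ixξ} u(ξ) dξ. -/
noncomputable def IFT (u : ℝ → ℂ) (x : ℝ) : ℂ :=
  (Real.sqrt (2 * Real.pi) : ℂ)⁻¹ * ∫ ξ : ℝ, Complex.exp (Complex.I * (x : ℂ) * (ξ : ℂ)) * u ξ

/-- ι(t) = sup_x |(1+W_t(x))⁻¹ − (1+|x|^β)⁻¹| where W_t(x) = V₂(tx)/V₂(t). -/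
noncomputable def iotaR (V₂ : ℝ → ℝ) (β t : ℝ) : ℝ :=
  ⨆ x : ℝ, |(1 + V₂ (t * x) / V₂ t)⁻¹ - (1 + |x| ^ β)⁻¹|

/-- κ_β = inf over nonzero C_c^∞ φ of ‖−φ' + |x|^β φ‖/‖φ‖, the reciprocal of the
norm of the inverse of the generalised Airy operator A_β = −∂ₓ + |x|^β. -/
noncomputable def airyBetaInvNorm (β : ℝ) : ℝ :=
  sInf { c : ℝ | ∃ φ : ℝ → ℂ, ContDiff ℝ (⊤ : ℕ∞) φ ∧ HasCompactSupport φ ∧ φ ≠ 0 ∧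
    c = L2R (fun x => -(deriv φ x) + Complex.ofReal (|x| ^ β) * φ x) / L2R φ }

/-- Assumption (R): V = iV₂ with V₂ : ℝ → [0,∞) smooth, even, eventually increasing,
regularly varying of index β > 0, with controlled derivatives. -/
structure AssumptionR (V₂ : ℝ → ℝ) (β : ℝ) : Prop where
  beta_pos : 0 < β
  nonneg : ∀ x, 0 ≤ V₂ x
  smooth : ContDiff ℝ (⊤ : ℕ∞) V₂
  even : ∀ x, V₂ (-x) = V₂ x
  eventually_incr : ∃ x₀ > 0, ∀ x > x₀, 0 < deriv V₂ x
  reg_var : ∀ x > 0, Tendsto (fun t => V₂ (t * x) / V₂ t) atTop (nhds (|x| ^ β))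
  controlled_derivs : ∀ n : ℕ, 1 ≤ n → ∃ C > 0, ∀ x : ℝ,
      |iteratedDeriv n V₂ x| ≤ C * (1 + V₂ x) / jbr x ^ n

lemma jbr_pos (x : ℝ) : 0 < jbr x :=
  Real.sqrt_pos.2 (by positivity)

lemma div_jbr_mul_le {t x : ℝ} (ht : 0 ≤ t) (hx : 1 ≤ |x|) :
    t / jbr (t * x) ≤ Real.sqrt 2 / jbr x := by
  rw [div_le_div_iff₀ (jbr_pos _) (jbr_pos _)]
  calc t * jbr x = Real.sqrt (t ^ 2 * (1 + x ^ 2)) := by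
        rw [Real.sqrt_mul (sq_nonneg t), Real.sqrt_sq ht, jbr]
    _ ≤ Real.sqrt (2 * (1 + (t * x) ^ 2)) :=
        Real.sqrt_le_sqrt (by nlinarith [one_le_sq_iff_one_le_abs x |>.2 hx, sq_nonneg t])
    _ = Real.sqrt 2 * jbr (t * x) := by rw [Real.sqrt_mul zero_le_two, jbr]

lemma lt_and_le_of_deriv_pos {f : ℝ → ℝ} {a b : ℝ} (hf : ContinuousOn f (Set.Ici a))
    (hderiv : ∀ x > a, 0 < deriv f x) (hab : a < b) : f a < f b ∧ ∀ t ≥ b, f b ≤ f t := by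
  have hmono : StrictMonoOn f (Set.Ici a) := by
    refine strictMonoOn_of_deriv_pos (convex_Ici a) hf fun x hx => hderiv x ?_
    rwa [interior_Ici] at hx
  exact ⟨hmono Set.self_mem_Ici hab.le hab,
    fun t hbt => hmono.monotoneOn hab.le (hab.le.trans hbt) hbt⟩

lemma one_add_div_le_max_mul {m v w : ℝ} (hm : 0 < m) (hmv : m ≤ v) (hw : 0 ≤ w) :
    (1 + w) / v ≤ max m⁻¹ 1 * (1 + w / v) := by
  have hv : 0 < v := hm.trans_le hmv
  calc (1 + w) / v = v⁻¹ + w / v := by ring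
    _ ≤ max m⁻¹ 1 + max m⁻¹ 1 * (w / v) := by
        gcongr
        · exact (inv_anti₀ hm hmv).trans (le_max_left _ _)
        · exact le_mul_of_one_le_left (by positivity) (le_max_right _ _)
    _ = max m⁻¹ 1 * (1 + w / v) := by ring

/-- Lemma `lem:Wt.asm`: uniform control of the derivatives of the
rescaled potential W_t(x) = V₂(tx)/V₂(t), using W_t^{(n)}(x) = tⁿ V₂^{(n)}(tx)/V₂(t). -/
theorem statement10 (V₂ : ℝ → ℝ) (β : ℝ) (hV : AssumptionR V₂ β) :
    ∃ t₀ > 0, ∀ n : ℕ, 1 ≤ n → ∃ D > 0, ∀ t > t₀, ∀ x : ℝ, 1 ≤ |x| →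
      |t ^ n * iteratedDeriv n V₂ (t * x) / V₂ t| ≤
        D * (1 + V₂ (t * x) / V₂ t) / jbr x ^ n := by
  obtain ⟨x₀, hx₀, hincr⟩ := hV.eventually_incr
  have hV_mono := lt_and_le_of_deriv_pos hV.smooth.continuous.continuousOn hincr
    (lt_add_one x₀)
  set m := V₂ (x₀ + 1)
  have hm : 0 < m := (hV.nonneg x₀).trans_lt hV_mono.1
  refine ⟨x₀ + 1, by linarith, fun n hn => ?_⟩
  obtain ⟨C, hC, hbound⟩ := hV.controlled_derivs n hn
  refine ⟨C * Real.sqrt 2 ^ n * max m⁻¹ 1, by positivity, fun t ht x hx => ?_⟩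
  have hmt : m ≤ V₂ t := hV_mono.2 t ht.le
  have hVt : 0 < V₂ t := hm.trans_le hmt
  have ht0 : 0 ≤ t := by linarith
  calc |t ^ n * iteratedDeriv n V₂ (t * x) / V₂ t|
      = t ^ n * |iteratedDeriv n V₂ (t * x)| / V₂ t := by
        rw [abs_div, abs_mul, abs_pow, abs_of_nonneg ht0, abs_of_pos hVt]
    _ ≤ t ^ n * (C * (1 + V₂ (t * x)) / jbr (t * x) ^ n) / V₂ t := by
        gcongr
        exact hbound _
    _ = C * (t / jbr (t * x)) ^ n * ((1 + V₂ (t * x)) / V₂ t) := by ring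
    _ ≤ C * (Real.sqrt 2 / jbr x) ^ n * (max m⁻¹ 1 * (1 + V₂ (t * x) / V₂ t)) := by
        have hW : 0 ≤ (1 + V₂ (t * x)) / V₂ t :=
          div_nonneg (by linarith [hV.nonneg (t * x)]) hVt.le
        have hbase : 0 ≤ t / jbr (t * x) := div_nonneg ht0 (jbr_pos _).le
        have hbracket : (t / jbr (t * x)) ^ n ≤ (Real.sqrt 2 / jbr x) ^ n :=
          pow_le_pow_left₀ hbase (div_jbr_mul_le ht0 hx) n
        exact mul_le_mul (mul_le_mul_of_nonneg_left hbracket hC.le)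
          (one_add_div_le_max_mul hm hmt (hV.nonneg _)) hW
          (mul_nonneg hC.le ((pow_nonneg hbase n).trans hbracket))
    _ = C * Real.sqrt 2 ^ n * max m⁻¹ 1 * (1 + V₂ (t * x) / V₂ t) / jbr x ^ n := by ring
end

section
/- Let V = iV₂ satisfy Assumption (R) on ℝ with index β > 0 and let ι(t) := sup_{x∈ℝ} |(1 + W_t(x))^{−1} − (1 + |x|^β)^{−1}|, where W_t(x) := V₂(tx)/V₂(t). Then ι(t) → 0 as t → +∞. -/
/-!
Put `F_t(y) = (1 + V₂(ty)/V₂(t))⁻¹`; by evenness it suffices to show `F_t → (1 + |y|^β)⁻¹`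
uniformly on `y ≥ 0`. Let `V₂` increase on `[x₀, ∞)` and fix `δ > 0`. Once `tδ ≥ x₀`,
the `F_t` are antitone on `[δ, ∞)`, and they converge pointwise (by regular variation) to a
continuous limit vanishing at infinity, so the convergence there is uniform by Pólya's theorem.
On `[0, δ]` we have `V₂(ty) ≤ max (sup_{[0, x₀]} V₂) (V₂(tδ))`; since `V₂(t) → ∞` (a bounded
eventually monotone `V₂` would force `V₂(2t)/V₂(t) → 1 ≠ 2^β`), both `V₂(ty)/V₂(t)` and `y^β`
are eventually below any `ε > δ^β`, which keeps both sides within `ε` of `1`.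
-/

open MeasureTheory Filter

open Set Topology

theorem exists_finset_subset_Icc_forall_mem_Ico_and_mem_Ioc (a b : ℝ) {η : ℝ} (hη : 0 < η) :
    ∃ S : Finset ℝ, ↑S ⊆ Icc a b ∧
      ∀ x ∈ Icc a b, (∃ p ∈ S, x ∈ Ico p (p + η)) ∧ ∃ q ∈ S, x ∈ Ioc (q - η) q := by
  rcases lt_trichotomy a b with hab | rfl | hba
  · obtain ⟨n, hn⟩ := exists_nat_gt ((b - a) / η)
    have hn0 : (0 : ℝ) < n := (div_pos (sub_pos.2 hab) hη).trans hn
    set s := (b - a) / n with hs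
    have hs0 : 0 < s := div_pos (sub_pos.2 hab) hn0
    have hsη : s < η := by rw [hs, div_lt_iff₀ hn0]; rw [div_lt_iff₀ hη] at hn; linarith
    have hb : b = a + n * s := by rw [hs]; field_simp; ring
    set S := (Finset.range (n + 1)).image fun k : ℕ => a + k * s
    have hmem : ∀ k : ℕ, k ≤ n → a + k * s ∈ S :=
      fun k hk => Finset.mem_image.2 ⟨k, Finset.mem_range.2 (Nat.lt_succ_of_le hk), rfl⟩
    refine ⟨S, fun y hy => ?_, fun x hx => ?_⟩
    · simp only [S, Finset.coe_image, Finset.coe_range, mem_image, mem_Iio] at hy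
      obtain ⟨k, hk, rfl⟩ := hy
      have : (k : ℝ) ≤ n := by exact_mod_cast Nat.lt_succ_iff.1 hk
      constructor <;> nlinarith
    set r := (x - a) / s
    have hr0 : 0 ≤ r := div_nonneg (sub_nonneg.2 hx.1) hs0.le
    have hrn : r ≤ n := by rw [div_le_iff₀ hs0]; linarith [hx.2]
    have hrs : r * s = x - a := div_mul_cancel₀ _ hs0.ne'
    refine ⟨⟨_, hmem _ (Nat.floor_le_of_le hrn), ?_, ?_⟩, ⟨_, hmem _ (Nat.ceil_le.2 hrn), ?_, ?_⟩⟩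
    · nlinarith [Nat.floor_le hr0]
    · nlinarith [Nat.lt_floor_add_one r]
    · nlinarith [Nat.ceil_lt_add_one hr0]
    · nlinarith [Nat.le_ceil r]
  · refine ⟨{a}, by simp, fun x hx => ?_⟩
    obtain rfl : x = a := le_antisymm hx.2 hx.1
    exact ⟨⟨x, by simp [hη]⟩, ⟨x, by simp [hη]⟩⟩
  · exact ⟨∅, by simp, fun x hx => absurd (hx.1.trans hx.2) hba.not_ge⟩

section Polya

variable {ι : Type*} {l : Filter ι} {F : ι → ℝ → ℝ} {G : ℝ → ℝ} {a b : ℝ}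

/-- Pólya's theorem, the analogue of Dini's theorem with monotonicity in the space variable. -/
theorem tendstoUniformlyOn_Icc_of_antitoneOn (hF : ∀ᶠ i in l, AntitoneOn (F i) (Icc a b))
    (hG : ContinuousOn G (Icc a b)) (hlim : ∀ x ∈ Icc a b, Tendsto (F · x) l (𝓝 (G x))) :
    TendstoUniformlyOn F G l (Icc a b) := by
  rw [Metric.tendstoUniformlyOn_iff]
  intro ε hε
  obtain ⟨η, hη, hGη⟩ := Metric.uniformContinuousOn_iff.1
    (isCompact_Icc.uniformContinuousOn_of_continuous hG) (ε / 2) (half_pos hε)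
  obtain ⟨S, hSsub, hS⟩ := exists_finset_subset_Icc_forall_mem_Ico_and_mem_Ioc a b hη
  have hgrid : ∀ᶠ i in l, ∀ p ∈ S, dist (F i p) (G p) < ε / 2 :=
    (eventually_all_finset S).2 fun p hp =>
      (hlim p (hSsub hp)).eventually (Metric.ball_mem_nhds _ (half_pos hε))
  filter_upwards [hF, hgrid] with i hFi hSi x hx
  obtain ⟨⟨p, hpS, hpx, hxp⟩, ⟨q, hqS, hqx, hxq⟩⟩ := hS x hx
  have hFp : F i x ≤ F i p := hFi (hSsub hpS) hx hpx
  have hFq : F i q ≤ F i x := hFi hx (hSsub hqS) hxq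
  have hGp := hGη p (hSsub hpS) x hx
    (by rw [Real.dist_eq, abs_sub_lt_iff]; constructor <;> linarith)
  have hGq := hGη q (hSsub hqS) x hx
    (by rw [Real.dist_eq, abs_sub_lt_iff]; constructor <;> linarith)
  have hp := hSi p hpS
  have hq := hSi q hqS
  rw [Real.dist_eq, abs_sub_lt_iff] at hGp hGq hp hq ⊢
  constructor <;> linarith

theorem tendstoUniformlyOn_Ici_of_antitoneOn {c : ℝ} (hF : ∀ᶠ i in l, AntitoneOn (F i) (Ici a))
    (hFc : ∀ᶠ i in l, ∀ x ∈ Ici a, c ≤ F i x) (hG : ContinuousOn G (Ici a))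
    (hGc : Tendsto G atTop (𝓝 c)) (hlim : ∀ x ∈ Ici a, Tendsto (F · x) l (𝓝 (G x))) :
    TendstoUniformlyOn F G l (Ici a) := by
  rw [Metric.tendstoUniformlyOn_iff]
  intro ε hε
  obtain ⟨X₀, hX₀⟩ := eventually_atTop.1
    (hGc.eventually (Metric.ball_mem_nhds c (by positivity : 0 < ε / 3)))
  set X := max a X₀
  have hXa : a ≤ X := le_max_left _ _
  have htail : ∀ x ≥ X, dist (G x) c < ε / 3 := fun x hx => hX₀ x ((le_max_right _ _).trans hx)
  have hIcc := Metric.tendstoUniformlyOn_iff.1 (tendstoUniformlyOn_Icc_of_antitoneOn (b := X)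
    (hF.mono fun i h => h.mono Icc_subset_Ici_self) (hG.mono Icc_subset_Ici_self)
    (fun x hx => hlim x hx.1)) ε hε
  have hFX := (hlim X hXa).eventually (Metric.ball_mem_nhds (G X) (by positivity : 0 < ε / 3))
  filter_upwards [hF, hFc, hIcc, hFX] with i hFi hFci hIcci hFXi x hx
  rcases le_total x X with hxX | hXx
  · exact hIcci x ⟨hx, hxX⟩
  have h1 : F i x ≤ F i X := hFi hXa hx hXx
  have h2 := hFci x hx
  have h3 := htail x hXx
  have h4 := htail X le_rfl
  rw [Real.dist_eq, abs_sub_lt_iff] at hFXi h3 h4 ⊢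
  constructor <;> linarith

end Polya

theorem tendsto_atTop_of_monotoneOn_of_tendsto_div {f : ℝ → ℝ} {x₀ c r : ℝ}
    (hmono : MonotoneOn f (Ici x₀)) (hpos : ∃ t ≥ x₀, 0 < f t) (hc : 0 < c)
    (hratio : Tendsto (fun t => f (t * c) / f t) atTop (𝓝 r)) (hr : r ≠ 1) :
    Tendsto f atTop atTop := by
  set g : ℝ → ℝ := fun t => f (max x₀ t)
  have hg : Monotone g := fun s t hst =>
    hmono (le_max_left x₀ s) (le_max_left x₀ t) (max_le_max le_rfl hst)
  have hgf : g =ᶠ[atTop] f := by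
    filter_upwards [eventually_ge_atTop x₀] with t ht using by simp [g, max_eq_right ht]
  by_cases hbdd : BddAbove (range g)
  · exfalso
    have hL : Tendsto f atTop (𝓝 (⨆ t, g t)) := (tendsto_atTop_ciSup hg hbdd).congr' hgf
    obtain ⟨t, ht, hft⟩ := hpos
    have hL0 : 0 < ⨆ t, g t := hft.trans_le (by simpa [g, max_eq_right ht] using le_ciSup hbdd t)
    have h1 : Tendsto (fun t => f (t * c) / f t) atTop (𝓝 1) := by
      rw [← div_self hL0.ne']
      exact (hL.comp (tendsto_id.atTop_mul_const hc)).div hL hL0.ne'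
    exact hr (tendsto_nhds_unique hratio h1)
  · exact (tendsto_atTop_atTop_of_monotone' hg hbdd).congr' hgf

theorem exists_forall_le_max_of_monotoneOn {f : ℝ → ℝ} {a x₀ : ℝ}
    (hf : ContinuousOn f (Icc a x₀)) (hmono : MonotoneOn f (Ici x₀)) :
    ∃ M, ∀ s ≥ x₀, ∀ z ∈ Icc a s, f z ≤ max M (f s) := by
  obtain ⟨M, hM⟩ := isCompact_Icc.bddAbove_image hf
  refine ⟨M, fun s hs z hz => ?_⟩
  rcases le_total z x₀ with hzx | hxz
  · exact le_max_of_le_left (hM ⟨z, ⟨hz.1, hzx⟩, rfl⟩)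
  · exact le_max_of_le_right (hmono hxz (le_trans hxz hz.2) hz.2)

theorem abs_inv_one_add_sub_inv_one_add_le_max {a b : ℝ} (ha : 0 ≤ a) (hb : 0 ≤ b) :
    |(1 + a)⁻¹ - (1 + b)⁻¹| ≤ max a b := by
  have key : ∀ w : ℝ, 0 ≤ w → 1 - w ≤ (1 + w)⁻¹ ∧ (1 + w)⁻¹ ≤ 1 := fun w hw =>
    ⟨by rw [← one_div, le_div_iff₀ (by linarith)]; nlinarith, inv_le_one_of_one_le₀ (by linarith)⟩
  obtain ⟨ha₁, ha₂⟩ := key a ha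
  obtain ⟨hb₁, hb₂⟩ := key b hb
  rw [abs_sub_le_iff]
  constructor <;> linarith [le_max_left a b, le_max_right a b]

theorem tendsto_iSup_abs_sub_of_tendstoUniformly {ι α : Type*} {l : Filter ι} {F : ι → α → ℝ}
    {f : α → ℝ} (h : TendstoUniformly F f l) :
    Tendsto (fun i => ⨆ x, |F i x - f x|) l (𝓝 0) := by
  rw [Metric.tendsto_nhds]
  intro ε hε
  filter_upwards [Metric.tendstoUniformly_iff.1 h (ε / 2) (half_pos hε)] with i hi
  have hle : ⨆ x, |F i x - f x| ≤ ε / 2 :=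
    Real.iSup_le (fun x => by rw [abs_sub_comm]; exact (hi x).le) (half_pos hε).le
  rw [Real.dist_eq, sub_zero, abs_of_nonneg (Real.iSup_nonneg fun x => abs_nonneg _)]
  linarith

namespace AssumptionR

variable {V₂ : ℝ → ℝ} {β : ℝ}

theorem exists_strictMonoOn_Ici (hV : AssumptionR V₂ β) : ∃ x₀, StrictMonoOn V₂ (Ici x₀) := by
  obtain ⟨x₀, -, hx₀⟩ := hV.eventually_incr
  exact ⟨x₀, strictMonoOn_of_deriv_pos (convex_Ici x₀) hV.smooth.continuous.continuousOn
    (by rw [interior_Ici]; exact hx₀)⟩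

theorem tendsto_atTop (hV : AssumptionR V₂ β) : Tendsto V₂ atTop atTop := by
  obtain ⟨x₀, hx₀⟩ := hV.exists_strictMonoOn_Ici
  have hpos : 0 < V₂ (x₀ + 1) :=
    (hV.nonneg x₀).trans_lt (hx₀ (mem_Ici.2 le_rfl) (by simp) (by linarith))
  refine tendsto_atTop_of_monotoneOn_of_tendsto_div hx₀.monotoneOn ⟨x₀ + 1, by linarith, hpos⟩
    two_pos (hV.reg_var 2 two_pos) ?_
  rw [abs_two]
  exact (Real.one_lt_rpow one_lt_two hV.beta_pos).ne'

theorem apply_mul_abs (hV : AssumptionR V₂ β) (t x : ℝ) :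
    V₂ (t * |x|) = V₂ (t * x) := by
  rcases le_total 0 x with hx | hx
  · rw [abs_of_nonneg hx]
  · rw [abs_of_nonpos hx, mul_neg, hV.even]

theorem tendsto_inv_one_add_div (hV : AssumptionR V₂ β) {x : ℝ} (hx : 0 < x) :
    Tendsto (fun t => (1 + V₂ (t * x) / V₂ t)⁻¹) atTop (𝓝 (1 + |x| ^ β)⁻¹) :=
  (tendsto_const_nhds.add (hV.reg_var x hx)).inv₀ (by positivity)

theorem eventually_antitoneOn (hV : AssumptionR V₂ β) {δ : ℝ} (hδ : 0 < δ) :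
    ∀ᶠ t in atTop, AntitoneOn (fun y => (1 + V₂ (t * y) / V₂ t)⁻¹) (Ici δ) := by
  obtain ⟨x₀, hx₀⟩ := hV.exists_strictMonoOn_Ici
  filter_upwards [(tendsto_id.atTop_mul_const hδ).eventually_ge_atTop x₀, eventually_gt_atTop 0,
    hV.tendsto_atTop.eventually_gt_atTop 0] with t htδ ht hVt y hy z hz hyz
  have hty : t * δ ≤ t * y := mul_le_mul_of_nonneg_left hy ht.le
  have htz : t * y ≤ t * z := mul_le_mul_of_nonneg_left hyz ht.le
  have hV_le : V₂ (t * y) ≤ V₂ (t * z) :=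
    hx₀.monotoneOn (htδ.trans hty) (htδ.trans (hty.trans htz)) htz
  have := hV.nonneg (t * y)
  exact inv_anti₀ (by positivity) (by gcongr)

theorem eventually_forall_Icc_div_lt (hV : AssumptionR V₂ β) {δ ε : ℝ} (hδ : 0 < δ)
    (hδε : δ ^ β < ε) : ∀ᶠ t in atTop, ∀ y ∈ Icc 0 δ, V₂ (t * y) / V₂ t < ε := by
  obtain ⟨x₀, hx₀⟩ := hV.exists_strictMonoOn_Ici
  obtain ⟨M, hM⟩ := exists_forall_le_max_of_monotoneOn (a := 0)
    hV.smooth.continuous.continuousOn hx₀.monotoneOn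
  have hlim : Tendsto (fun t => max (M / V₂ t) (V₂ (t * δ) / V₂ t)) atTop (𝓝 (max 0 (|δ| ^ β))) :=
    (tendsto_const_nhds.div_atTop hV.tendsto_atTop).max (hV.reg_var δ hδ)
  rw [abs_of_pos hδ, max_eq_right (by positivity)] at hlim
  filter_upwards [hlim.eventually (gt_mem_nhds hδε),
    (tendsto_id.atTop_mul_const hδ).eventually_ge_atTop x₀, eventually_gt_atTop 0,
    hV.tendsto_atTop.eventually_gt_atTop 0] with t hlt htδ ht hVt y hy
  calc V₂ (t * y) / V₂ t ≤ max M (V₂ (t * δ)) / V₂ t := by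
        gcongr
        exact hM _ htδ _ ⟨mul_nonneg ht.le hy.1, mul_le_mul_of_nonneg_left hy.2 ht.le⟩
    _ = max (M / V₂ t) (V₂ (t * δ) / V₂ t) := (max_div_div_right hVt.le _ _).symm
    _ < ε := hlt

theorem tendstoUniformlyOn_Ici_zero (hV : AssumptionR V₂ β) :
    TendstoUniformlyOn (fun t y => (1 + V₂ (t * y) / V₂ t)⁻¹) (fun y => (1 + |y| ^ β)⁻¹) atTop
      (Ici 0) := by
  have hβ := hV.beta_pos
  have hG : Continuous fun y : ℝ => (1 + |y| ^ β)⁻¹ :=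
    (continuous_const.add ((Real.continuous_rpow_const hβ.le).comp continuous_abs)).inv₀
      fun y => by simp only [Pi.add_apply, Function.comp_apply]; positivity
  have hG0 : Tendsto (fun y : ℝ => (1 + |y| ^ β)⁻¹) atTop (𝓝 0) :=
    tendsto_inv_atTop_zero.comp (tendsto_atTop_add_const_left _ 1
      ((tendsto_rpow_atTop hβ).comp tendsto_abs_atTop_atTop))
  have hF0 : ∀ᶠ t in atTop, ∀ y ∈ Ici (0 : ℝ), (0 : ℝ) ≤ (1 + V₂ (t * y) / V₂ t)⁻¹ :=
    Eventually.of_forall fun t y _ => by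
      have := hV.nonneg (t * y); have := hV.nonneg t; positivity
  rw [Metric.tendstoUniformlyOn_iff]
  intro ε hε
  set δ := (ε / 2) ^ β⁻¹
  have hδ : 0 < δ := by positivity
  have hδε : δ ^ β < ε := by rw [Real.rpow_inv_rpow (by positivity) hβ.ne']; linarith
  have hfar := Metric.tendstoUniformlyOn_iff.1 (tendstoUniformlyOn_Ici_of_antitoneOn
    (hV.eventually_antitoneOn hδ) (hF0.mono fun t h y hy => h y (hδ.le.trans hy))
    hG.continuousOn hG0 fun y hy => hV.tendsto_inv_one_add_div (hδ.trans_le hy)) ε hε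
  filter_upwards [hfar, hV.eventually_forall_Icc_div_lt hδ hδε,
    hV.tendsto_atTop.eventually_gt_atTop 0] with t hfar hnear hVt y hy
  rcases le_total y δ with hyδ | hδy
  · have hyβ : |y| ^ β < ε := by
      rw [abs_of_nonneg hy]
      exact (Real.rpow_le_rpow hy hyδ hβ.le).trans_lt hδε
    rw [Real.dist_eq]
    exact (abs_inv_one_add_sub_inv_one_add_le_max (by positivity)
      (div_nonneg (hV.nonneg _) hVt.le)).trans_lt (max_lt hyβ (hnear y ⟨hy, hyδ⟩))
  · exact hfar y hδy

end AssumptionR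

/-- Lemma `lem:reg.var.conv`: ι(t) → 0 as t → +∞. -/
theorem statement12 (V₂ : ℝ → ℝ) (β : ℝ) (hV : AssumptionR V₂ β) :
    Tendsto (fun t => iotaR V₂ β t) atTop (nhds 0) := by
  have h := hV.tendstoUniformlyOn_Ici_zero.comp fun x : ℝ => |x|
  rw [show (fun x : ℝ => |x|) ⁻¹' Ici 0 = univ from eq_univ_of_forall fun x => abs_nonneg x,
    tendstoUniformlyOn_univ] at h
  refine (tendsto_iSup_abs_sub_of_tendstoUniformly h).congr fun t => ?_
  simp only [iotaR, Function.comp_apply, hV.apply_mul_abs, abs_abs]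
end

section
/- Let r : [0,∞) → (0,∞) be continuously differentiable, eventually increasing (r'(y) > 0 for all large y), regularly varying at infinity with positive index (i.e., there is β > 0 with lim_{t→+∞} r(ty)/r(t) = y^β for every y > 0), and suppose |r'(y)| ≤ c·r(y)·y^{−1} for all large y and some c > 0. Then the following three conditions hold: (1) there is C₁ > 0 with ∫₀^y r(u)^{3/2} du ≤ C₁·y·r(y)^{3/2} for all large y; (2) there is C₂ > 0 with |r'(y)|·r(y)^{−5/2}·∫₀^y r(u)^{3/2} du ≤ C₂ for all large y; (3) r(y)^{1/2}/∫₀^y r(u)^{3/2} du → 0 as y → +∞. -/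
open MeasureTheory Filter Set Topology

/-!
Once `r' > 0`, `r` and hence `g = r ^ (3/2)` increase on some `[a, ∞)`, so
`F y = ∫₀^y g` satisfies `y/2 · g (y/2) ≤ F y ≤ F a + y · g y ≤ 2 y · g y` for large `y`.
The upper bound is (1), and combined with `|r'| ≤ c r / y` it gives (2) with `C₂ = 2c`.
Regular variation at `y = 2` gives the doubling bound `r (2t) ≤ K r t`, so by the lower bound
`r(y)^{1/2} / F y ≲ 1 / (y · r (y/2)) ≤ 1 / (y · r a)`, which is (3).
-/

lemma exists_strictMonoOn_Ici_of_eventually_deriv_pos {f : ℝ → ℝ} {b : ℝ}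
    (hf : ContinuousOn f (Ici b)) (hderiv : ∀ᶠ y in atTop, 0 < deriv f y) :
    ∃ a ≥ b, StrictMonoOn f (Ici a) := by
  obtain ⟨a₀, ha₀⟩ := eventually_atTop.1 hderiv
  refine ⟨max a₀ b, le_max_right _ _, strictMonoOn_of_deriv_pos (convex_Ici _)
    (hf.mono (Ici_subset_Ici.2 (le_max_right _ _))) fun x hx => ha₀ x ?_⟩
  rw [interior_Ici] at hx
  exact (le_max_left _ _).trans hx.le

lemma ContinuousOn.intervalIntegrable_of_Ici {f : ℝ → ℝ} {b p q : ℝ} (hf : ContinuousOn f (Ici b))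
    (hp : b ≤ p) (hq : b ≤ q) : IntervalIntegrable f volume p q :=
  (hf.mono fun _ hu => (le_min hp hq).trans hu.1).intervalIntegrable

lemma MonotoneOn.rpow_const {f : ℝ → ℝ} {s : Set ℝ} (hf : MonotoneOn f s)
    (hf0 : ∀ x ∈ s, 0 ≤ f x) {p : ℝ} (hp : 0 ≤ p) : MonotoneOn (fun x => f x ^ p) s :=
  fun _ hx _ hy hxy => Real.rpow_le_rpow (hf0 _ hx) (hf hx hy hxy) hp

section MonotoneIntegrand

variable {g : ℝ → ℝ} {s y : ℝ}

lemma MonotoneOn.intervalIntegral_le_sub_mul (hg : MonotoneOn g (Icc s y)) (hsy : s ≤ y) :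
    ∫ u in s..y, g u ≤ (y - s) * g y := by
  have hint : IntervalIntegrable g volume s y :=
    MonotoneOn.intervalIntegrable (by rwa [uIcc_of_le hsy])
  simpa using intervalIntegral.integral_mono_on hsy hint intervalIntegrable_const
    fun u hu => hg hu (right_mem_Icc.2 hsy) hu.2

lemma MonotoneOn.sub_mul_le_intervalIntegral (hg : MonotoneOn g (Icc s y)) (hsy : s ≤ y) :
    (y - s) * g s ≤ ∫ u in s..y, g u := by
  have hint : IntervalIntegrable g volume s y :=
    MonotoneOn.intervalIntegrable (by rwa [uIcc_of_le hsy])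
  simpa using intervalIntegral.integral_mono_on hsy intervalIntegrable_const hint
    fun u hu => hg (left_mem_Icc.2 hsy) hu hu.1

end MonotoneIntegrand

section EventuallyMonotone

variable {g : ℝ → ℝ} {a : ℝ}

lemma eventually_intervalIntegral_le_two_mul (hg : ContinuousOn g (Ici 0)) (ha : 0 ≤ a)
    (hmono : MonotoneOn g (Ici a)) (hga : 0 < g a) :
    ∀ᶠ y in atTop, ∫ u in 0..y, g u ≤ 2 * y * g y := by
  filter_upwards [eventually_ge_atTop a, eventually_ge_atTop ((∫ u in 0..a, g u) / g a)]
    with y hay hy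
  have hgay : g a ≤ g y := hmono self_mem_Ici hay hay
  have h_head : ∫ u in 0..a, g u ≤ y * g y :=
    ((div_le_iff₀ hga).1 hy).trans (by gcongr; linarith)
  have h_tail := (hmono.mono Icc_subset_Ici_self).intervalIntegral_le_sub_mul hay
  rw [← intervalIntegral.integral_add_adjacent_intervals (hg.intervalIntegrable_of_Ici le_rfl ha)
    (hg.intervalIntegrable_of_Ici ha (ha.trans hay))]
  nlinarith [mul_nonneg ha (hga.trans_le hgay).le]

lemma mul_le_intervalIntegral_mul_two (hg : ContinuousOn g (Ici 0)) (hg0 : ∀ u ≥ 0, 0 ≤ g u)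
    (ha : 0 ≤ a) (hmono : MonotoneOn g (Ici a)) {s : ℝ} (has : a ≤ s) :
    s * g s ≤ ∫ u in 0..s * 2, g u := by
  have hs : 0 ≤ s := ha.trans has
  rw [← intervalIntegral.integral_add_adjacent_intervals (hg.intervalIntegrable_of_Ici le_rfl hs)
    (hg.intervalIntegrable_of_Ici hs (by linarith))]
  have h_head : 0 ≤ ∫ u in 0..s, g u :=
    intervalIntegral.integral_nonneg hs fun u hu => hg0 u hu.1
  have h_tail := (hmono.mono (Icc_subset_Ici_iff (by linarith) |>.2 has)).sub_mul_le_intervalIntegral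
    (by linarith : s ≤ s * 2)
  linarith [show (s * 2 - s) * g s = s * g s by ring]

end EventuallyMonotone

lemma eventually_abs_deriv_mul_rpow_mul_le {r F : ℝ → ℝ} {c : ℝ} (hpos : ∀ᶠ y in atTop, 0 < r y)
    (hbound : ∀ᶠ y in atTop, |deriv r y| ≤ c * r y / y)
    (hF : ∀ᶠ y in atTop, F y ≤ 2 * y * r y ^ ((3:ℝ)/2)) :
    ∀ᶠ y in atTop, |deriv r y| * r y ^ (-(5:ℝ)/2) * F y ≤ 2 * c := by
  filter_upwards [hpos, hbound, hF, eventually_gt_atTop 0] with y hr hd hFy hy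
  calc |deriv r y| * r y ^ (-(5:ℝ)/2) * F y
      ≤ |deriv r y| * r y ^ (-(5:ℝ)/2) * (2 * y * r y ^ ((3:ℝ)/2)) := by gcongr
    _ = 2 * (|deriv r y| * y) / r y := by
      rw [show (-(5:ℝ)/2) = -1 - 3/2 by norm_num, Real.rpow_sub hr, Real.rpow_neg_one]
      field_simp
    _ ≤ 2 * c := by
      rw [div_le_iff₀ hr]
      linarith [(le_div_iff₀ hy).1 hd]

lemma eventually_le_mul_of_tendsto_div {r : ℝ → ℝ} {y L : ℝ} (hpos : ∀ᶠ t in atTop, 0 < r t)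
    (h : Tendsto (fun t => r (t * y) / r t) atTop (𝓝 L)) :
    ∀ᶠ t in atTop, r (t * y) ≤ (L + 1) * r t := by
  filter_upwards [h.eventually_le_const (lt_add_one L), hpos] with t ht hrt
  rwa [div_le_iff₀ hrt] at ht

lemma tendsto_rpow_div_intervalIntegral_rpow_atTop {r : ℝ → ℝ} {a K : ℝ}
    (hpos : ∀ y ≥ 0, 0 < r y) (hcont : ContinuousOn r (Ici 0)) (ha : 0 ≤ a)
    (hmono : MonotoneOn r (Ici a)) (hdoubling : ∀ᶠ t in atTop, r (t * 2) ≤ K * r t) :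
    Tendsto (fun y => r y ^ ((1:ℝ)/2) / ∫ u in (0:ℝ)..y, r u ^ ((3:ℝ)/2)) atTop (𝓝 0) := by
  set g : ℝ → ℝ := fun u => r u ^ ((3:ℝ)/2)
  have hlow : ∀ s ≥ a, s * g s ≤ ∫ u in 0..s * 2, g u := fun s has =>
    mul_le_intervalIntegral_mul_two (hcont.rpow_const fun _ _ => Or.inr (by norm_num))
      (fun u hu => (Real.rpow_pos_of_pos (hpos u hu) _).le) ha
      (hmono.rpow_const (fun x hx => (hpos x (ha.trans hx)).le) (by norm_num)) has
  suffices Tendsto (fun s => r (s * 2) ^ ((1:ℝ)/2) / ∫ u in (0:ℝ)..s * 2, g u) atTop (𝓝 0) by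
    simpa [Function.comp_def] using this.comp (tendsto_id.atTop_div_const two_pos)
  refine tendsto_of_tendsto_of_tendsto_of_le_of_le' tendsto_const_nhds
    ((tendsto_const_nhds (x := K ^ ((1:ℝ)/2) / r a)).div_atTop tendsto_id) ?_ ?_
  · filter_upwards [eventually_ge_atTop a] with s has
    have hs : 0 ≤ s := ha.trans has
    exact div_nonneg (Real.rpow_nonneg (hpos _ (by positivity)).le _)
      ((mul_nonneg hs (Real.rpow_pos_of_pos (hpos s hs) _).le).trans (hlow s has))
  · filter_upwards [eventually_ge_atTop a, eventually_gt_atTop 0, hdoubling] with s has hs hK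
    have hrs : 0 < r s := hpos s hs.le
    have hK0 : 0 ≤ K := by nlinarith [hpos (s * 2) (by positivity)]
    calc r (s * 2) ^ ((1:ℝ)/2) / ∫ u in (0:ℝ)..s * 2, g u
        ≤ (K * r s) ^ ((1:ℝ)/2) / (s * g s) :=
          div_le_div₀ (by positivity) (Real.rpow_le_rpow (hpos _ (by positivity)).le hK
            (by norm_num)) (by positivity) (hlow s has)
      _ = K ^ ((1:ℝ)/2) / r s / s := by
        simp only [g]
        rw [Real.mul_rpow hK0 hrs.le, show (3:ℝ)/2 = 1/2 + 1 by norm_num, Real.rpow_add hrs,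
          Real.rpow_one]
        field_simp
      _ ≤ K ^ ((1:ℝ)/2) / r a / s := by
        gcongr
        · exact hpos a ha
        · exact hmono self_mem_Ici has has

theorem statement18_general (r : ℝ → ℝ) (β c : ℝ)
    (hpos : ∀ y ≥ (0:ℝ), 0 < r y)
    (hC1 : ContDiffOn ℝ 1 r (Set.Ici (0:ℝ)))
    (hincr : ∀ᶠ y in atTop, 0 < deriv r y)
    (hreg : ∀ y > (0:ℝ), Tendsto (fun t => r (t * y) / r t) atTop (nhds (y ^ β)))
    (hc : 0 < c)
    (hbound : ∀ᶠ y in atTop, |deriv r y| ≤ c * r y / y) :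
    (∃ C₁ > 0, ∀ᶠ y in atTop,
        (∫ u in (0:ℝ)..y, r u ^ ((3:ℝ)/2)) ≤ C₁ * y * r y ^ ((3:ℝ)/2)) ∧
    (∃ C₂ > 0, ∀ᶠ y in atTop,
        |deriv r y| * r y ^ (-(5:ℝ)/2) * (∫ u in (0:ℝ)..y, r u ^ ((3:ℝ)/2)) ≤ C₂) ∧
    Tendsto (fun y => r y ^ ((1:ℝ)/2) / ∫ u in (0:ℝ)..y, r u ^ ((3:ℝ)/2))
      atTop (nhds 0) := by
  have hcont := hC1.continuousOn
  obtain ⟨a, ha, hmono⟩ := exists_strictMonoOn_Ici_of_eventually_deriv_pos hcont hincr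
  have hpos_atTop : ∀ᶠ y in atTop, 0 < r y := (eventually_ge_atTop 0).mono hpos
  have hcond1 : ∀ᶠ y in atTop, ∫ u in (0:ℝ)..y, r u ^ ((3:ℝ)/2) ≤ 2 * y * r y ^ ((3:ℝ)/2) :=
    eventually_intervalIntegral_le_two_mul (hcont.rpow_const fun _ _ => Or.inr (by norm_num)) ha
      (hmono.monotoneOn.rpow_const (fun x hx => (hpos x (ha.trans hx)).le) (by norm_num))
      (Real.rpow_pos_of_pos (hpos a ha) _)
  refine ⟨⟨2, two_pos, hcond1⟩,
    ⟨2 * c, by positivity, eventually_abs_deriv_mul_rpow_mul_le hpos_atTop hbound hcond1⟩, ?_⟩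
  exact tendsto_rpow_div_intervalIntegral_rpow_atTop hpos hcont ha hmono.monotoneOn
    (eventually_le_mul_of_tendsto_div hpos_atTop (hreg 2 two_pos))

/-- second part of Proposition `prop:batty`: a regularly varying,
eventually increasing C¹ rate r with |r'(y)| ≲ r(y)/y satisfies the three
integral conditions needed for the inverse spectral construction. -/
theorem statement18 (r : ℝ → ℝ) (β c : ℝ)
    (hpos : ∀ y ≥ (0:ℝ), 0 < r y)
    (hC1 : ContDiffOn ℝ 1 r (Set.Ici (0:ℝ)))
    (hincr : ∀ᶠ y in atTop, 0 < deriv r y)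
    (hβ : 0 < β)
    (hreg : ∀ y > (0:ℝ), Tendsto (fun t => r (t * y) / r t) atTop (nhds (y ^ β)))
    (hc : 0 < c)
    (hbound : ∀ᶠ y in atTop, |deriv r y| ≤ c * r y / y) :
    (∃ C₁ > 0, ∀ᶠ y in atTop,
        (∫ u in (0:ℝ)..y, r u ^ ((3:ℝ)/2)) ≤ C₁ * y * r y ^ ((3:ℝ)/2)) ∧
    (∃ C₂ > 0, ∀ᶠ y in atTop,
        |deriv r y| * r y ^ (-(5:ℝ)/2) * (∫ u in (0:ℝ)..y, r u ^ ((3:ℝ)/2)) ≤ C₂) ∧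
    Tendsto (fun y => r y ^ ((1:ℝ)/2) / ∫ u in (0:ℝ)..y, r u ^ ((3:ℝ)/2))
      atTop (nhds 0) :=
  statement18_general r β c hpos hC1 hincr hreg hc hbound
end
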